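/- The function f(ρ) = (1 + (2/π)·arcsin ρ)/(1 + ρ) on (−1, 1] attains its minimum; the minimum value α_GW satisfies 0.878 < α_GW < 0.879, and every minimizer ρ* satisfies 0.68 < ρ* < 0.70. -/
import Mathlib


/-- The Goemans–Williamson ratio function `f(ρ) = (1 + (2/π) arcsin ρ)/(1+ρ)`. -/
noncomputable def gwRatio (ρ : ℝ) : ℝ := (1 + 2 / Real.pi * Real.arcsin ρ) / (1 + ρ)

open Real Set

lemma nonneg_of_deriv_aux {f f' : ℝ → ℝ} (hf : ∀ x, HasDerivAt f (f' x) x)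
    (h0 : f 0 = 0) (hd : ∀ x, 0 ≤ x → 0 ≤ f' x) {x : ℝ} (hx : 0 ≤ x) : 0 ≤ f x := by
  have hmono : MonotoneOn f (Ici (0 : ℝ)) := by
    apply monotoneOn_of_deriv_nonneg (convex_Ici 0)
    · exact fun y _ => (hf y).continuousAt.continuousWithinAt
    · exact fun y _ => (hf y).differentiableAt.differentiableWithinAt
    · intro y hy
      rw [(hf y).deriv]
      exact hd y (le_of_lt (by simpa [interior_Ici] using hy))
  have := hmono self_mem_Ici (mem_Ici.2 hx) hx
  simpa [h0] using this

lemma sin_ge_cube {x : ℝ} (hx : 0 ≤ x) : x - x ^ 3 / 6 ≤ Real.sin x := by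
  have h := nonneg_of_deriv_aux (f := fun x => Real.sin x - (x - x ^ 3 / 6))
    (f' := fun x => Real.cos x - (1 - x ^ 2 / 2)) ?_ (by norm_num) ?_ hx
  · linarith [h]
  · intro y
    have : HasDerivAt (fun x : ℝ => Real.sin x - (x - x ^ 3 / 6))
        (Real.cos y - (1 - 3 * y ^ (3 - 1) / 6)) y :=
      (Real.hasDerivAt_sin y).sub ((hasDerivAt_id y).sub ((hasDerivAt_pow 3 y).div_const 6))
    convert this using 1
    norm_num; ring
  · intro y _
    have := Real.one_sub_sq_div_two_le_cos (x := y)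
    linarith

lemma cos_le_quart {x : ℝ} (hx : 0 ≤ x) : Real.cos x ≤ 1 - x ^ 2 / 2 + x ^ 4 / 24 := by
  have h := nonneg_of_deriv_aux (f := fun x => 1 - x ^ 2 / 2 + x ^ 4 / 24 - Real.cos x)
    (f' := fun x => -(x - x ^ 3 / 6) + Real.sin x) ?_ (by norm_num) ?_ hx
  · linarith [h]
  · intro y
    have : HasDerivAt (fun x : ℝ => 1 - x ^ 2 / 2 + x ^ 4 / 24 - Real.cos x)
        (0 - 2 * y ^ (2 - 1) / 2 + 4 * y ^ (4 - 1) / 24 - -Real.sin y) y :=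
      (((hasDerivAt_const y (1 : ℝ)).sub ((hasDerivAt_pow 2 y).div_const 2)).add
        ((hasDerivAt_pow 4 y).div_const 24)).sub (Real.hasDerivAt_cos y)
    convert this using 1
    norm_num; ring
  · intro y hy
    have := sin_ge_cube hy
    linarith

lemma sin_le_p5 {x : ℝ} (hx : 0 ≤ x) : Real.sin x ≤ x - x ^ 3 / 6 + x ^ 5 / 120 := by
  have h := nonneg_of_deriv_aux (f := fun x => x - x ^ 3 / 6 + x ^ 5 / 120 - Real.sin x)
    (f' := fun x => 1 - x ^ 2 / 2 + x ^ 4 / 24 - Real.cos x) ?_ (by norm_num) ?_ hx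
  · linarith [h]
  · intro y
    have : HasDerivAt (fun x : ℝ => x - x ^ 3 / 6 + x ^ 5 / 120 - Real.sin x)
        (1 - 3 * y ^ (3 - 1) / 6 + 5 * y ^ (5 - 1) / 120 - Real.cos y) y :=
      (((hasDerivAt_id y).sub ((hasDerivAt_pow 3 y).div_const 6)).add
        ((hasDerivAt_pow 5 y).div_const 120)).sub (Real.hasDerivAt_sin y)
    convert this using 1
    norm_num; ring
  · intro y hy
    have := cos_le_quart hy
    linarith

lemma cos_ge_p6 {x : ℝ} (hx : 0 ≤ x) :
    1 - x ^ 2 / 2 + x ^ 4 / 24 - x ^ 6 / 720 ≤ Real.cos x := by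
  have h := nonneg_of_deriv_aux
    (f := fun x => Real.cos x - (1 - x ^ 2 / 2 + x ^ 4 / 24 - x ^ 6 / 720))
    (f' := fun x => x - x ^ 3 / 6 + x ^ 5 / 120 - Real.sin x) ?_ (by norm_num) ?_ hx
  · linarith [h]
  · intro y
    have : HasDerivAt (fun x : ℝ => Real.cos x - (1 - x ^ 2 / 2 + x ^ 4 / 24 - x ^ 6 / 720))
        (-Real.sin y - (0 - 2 * y ^ (2 - 1) / 2 + 4 * y ^ (4 - 1) / 24 - 6 * y ^ (6 - 1) / 720)) y :=
      (Real.hasDerivAt_cos y).sub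
        ((((hasDerivAt_const y (1 : ℝ)).sub ((hasDerivAt_pow 2 y).div_const 2)).add
          ((hasDerivAt_pow 4 y).div_const 24)).sub ((hasDerivAt_pow 6 y).div_const 720))
    convert this using 1
    norm_num; ring
  · intro y hy
    have := sin_le_p5 hy
    linarith

lemma p7_le_sin {x : ℝ} (hx : 0 ≤ x) :
    x - x ^ 3 / 6 + x ^ 5 / 120 - x ^ 7 / 5040 ≤ Real.sin x := by
  have h := nonneg_of_deriv_aux
    (f := fun x => Real.sin x - (x - x ^ 3 / 6 + x ^ 5 / 120 - x ^ 7 / 5040))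
    (f' := fun x => Real.cos x - (1 - x ^ 2 / 2 + x ^ 4 / 24 - x ^ 6 / 720)) ?_ (by norm_num) ?_ hx
  · linarith [h]
  · intro y
    have : HasDerivAt (fun x : ℝ => Real.sin x - (x - x ^ 3 / 6 + x ^ 5 / 120 - x ^ 7 / 5040))
        (Real.cos y - (1 - 3 * y ^ (3 - 1) / 6 + 5 * y ^ (5 - 1) / 120 - 7 * y ^ (7 - 1) / 5040)) y :=
      (Real.hasDerivAt_sin y).sub
        ((((hasDerivAt_id y).sub ((hasDerivAt_pow 3 y).div_const 6)).add
          ((hasDerivAt_pow 5 y).div_const 120)).sub ((hasDerivAt_pow 7 y).div_const 5040))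
    convert this using 1
    norm_num; ring
  · intro y hy
    have := cos_ge_p6 hy
    linarith

lemma arcsin_68_gt : (0.74772 : ℝ) < Real.arcsin 0.68 := by
  have hs : Real.sin 0.74772 < 0.68 := by
    calc Real.sin 0.74772 ≤ (0.74772 : ℝ) - 0.74772 ^ 3 / 6 + 0.74772 ^ 5 / 120 :=
          sin_le_p5 (by norm_num)
      _ < 0.68 := by norm_num
  have hpi := Real.pi_gt_three
  calc (0.74772 : ℝ) = Real.arcsin (Real.sin 0.74772) :=
        (Real.arcsin_sin (by linarith) (by linarith)).symm
    _ < Real.arcsin 0.68 :=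
        Real.strictMonoOn_arcsin ⟨Real.neg_one_le_sin _, Real.sin_le_one _⟩
          ⟨by norm_num, by norm_num⟩ hs

lemma arcsin_70_gt : (0.775318 : ℝ) < Real.arcsin 0.70 := by
  have hs : Real.sin 0.775318 < 0.70 := by
    calc Real.sin 0.775318 ≤ (0.775318 : ℝ) - 0.775318 ^ 3 / 6 + 0.775318 ^ 5 / 120 :=
          sin_le_p5 (by norm_num)
      _ < 0.70 := by norm_num
  have hpi := Real.pi_gt_three
  calc (0.775318 : ℝ) = Real.arcsin (Real.sin 0.775318) :=
        (Real.arcsin_sin (by linarith) (by linarith)).symm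
    _ < Real.arcsin 0.70 :=
        Real.strictMonoOn_arcsin ⟨Real.neg_one_le_sin _, Real.sin_le_one _⟩
          ⟨by norm_num, by norm_num⟩ hs

lemma arcsin_689_lt : Real.arcsin 0.689 < 0.760136 := by
  have hs : (0.689 : ℝ) < Real.sin 0.760136 := by
    calc (0.689 : ℝ)
        < (0.760136 : ℝ) - 0.760136 ^ 3 / 6 + 0.760136 ^ 5 / 120 - 0.760136 ^ 7 / 5040 := by
          norm_num
      _ ≤ Real.sin 0.760136 := p7_le_sin (by norm_num)
  have hpi := Real.pi_gt_three
  calc Real.arcsin 0.689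
      < Real.arcsin (Real.sin 0.760136) :=
        Real.strictMonoOn_arcsin ⟨by norm_num, by norm_num⟩
          ⟨Real.neg_one_le_sin _, Real.sin_le_one _⟩ hs
    _ = 0.760136 := Real.arcsin_sin (by linarith) (by linarith)

/-- Jordan-type bound: `π ρ ≤ 2 arcsin ρ` for `ρ ∈ [-1, 0]`. -/
lemma jordan_neg {ρ : ℝ} (h1 : -1 ≤ ρ) (h2 : ρ ≤ 0) : π * ρ ≤ 2 * Real.arcsin ρ := by
  have hpi := Real.pi_pos
  have hx0 : 0 ≤ π / 2 * (-ρ) := by nlinarith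
  have hx1 : π / 2 * (-ρ) ≤ π / 2 := by nlinarith
  have hsin : -ρ ≤ Real.sin (π / 2 * (-ρ)) := by
    have h := Real.mul_le_sin hx0 hx1
    have : 2 / π * (π / 2 * (-ρ)) = -ρ := by field_simp
    linarith [this ▸ h]
  have harc : Real.arcsin (-ρ) ≤ π / 2 * (-ρ) := by
    calc Real.arcsin (-ρ) ≤ Real.arcsin (Real.sin (π / 2 * (-ρ))) := Real.monotone_arcsin hsin
      _ = π / 2 * (-ρ) := Real.arcsin_sin (by linarith) hx1
  rw [Real.arcsin_neg] at harc
  nlinarith [harc]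

lemma gAux_hasDerivAt (K L : ℝ) {x : ℝ} (h1 : x ≠ -1) (h2 : x ≠ 1) :
    HasDerivAt (fun t : ℝ => π + 2 * Real.arcsin t - K * (π * (1 + t)) + L * t)
      (2 / Real.sqrt (1 - x ^ 2) - K * π + L) x := by
  have ha := Real.hasDerivAt_arcsin h1 h2
  have h : HasDerivAt (fun t : ℝ => π + 2 * Real.arcsin t - K * (π * (1 + t)) + L * t)
      (2 * (1 / Real.sqrt (1 - x ^ 2)) - K * (π * 1) + L * 1) x :=
    (((ha.const_mul 2).const_add π).sub
      ((((hasDerivAt_id x).const_add 1).const_mul π).const_mul K)).add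
      ((hasDerivAt_id x).const_mul L)
  convert h using 1
  ring

lemma gAux_mono {K L a b : ℝ} (h1 : -1 < a) (h2 : b ≤ 1)
    (hd : ∀ x ∈ Ioo a b, 0 ≤ 2 / Real.sqrt (1 - x ^ 2) - K * π + L) :
    MonotoneOn (fun t : ℝ => π + 2 * Real.arcsin t - K * (π * (1 + t)) + L * t) (Icc a b) := by
  apply monotoneOn_of_deriv_nonneg (convex_Icc a b)
  · apply Continuous.continuousOn
    exact ((continuous_const.add (continuous_const.mul Real.continuous_arcsin)).sub
      (continuous_const.mul (continuous_const.mul (continuous_const.add continuous_id)))).add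
      (continuous_const.mul continuous_id)
  · rw [interior_Icc]
    intro x hx
    exact (gAux_hasDerivAt K L (by intro h; rw [h] at hx; exact absurd hx.1 (by linarith))
      (by intro h; rw [h] at hx; exact absurd hx.2 (by linarith))).differentiableAt.differentiableWithinAt
  · rw [interior_Icc]
    intro x hx
    rw [(gAux_hasDerivAt K L (by intro h; rw [h] at hx; exact absurd hx.1 (by linarith))
      (by intro h; rw [h] at hx; exact absurd hx.2 (by linarith))).deriv]
    exact hd x hx

lemma gAux_anti {K L a b : ℝ} (h1 : -1 < a) (h2 : b ≤ 1)
    (hd : ∀ x ∈ Ioo a b, 2 / Real.sqrt (1 - x ^ 2) - K * π + L ≤ 0) :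
    AntitoneOn (fun t : ℝ => π + 2 * Real.arcsin t - K * (π * (1 + t)) + L * t) (Icc a b) := by
  apply antitoneOn_of_deriv_nonpos (convex_Icc a b)
  · apply Continuous.continuousOn
    exact ((continuous_const.add (continuous_const.mul Real.continuous_arcsin)).sub
      (continuous_const.mul (continuous_const.mul (continuous_const.add continuous_id)))).add
      (continuous_const.mul continuous_id)
  · rw [interior_Icc]
    intro x hx
    exact (gAux_hasDerivAt K L (by intro h; rw [h] at hx; exact absurd hx.1 (by linarith))
      (by intro h; rw [h] at hx; exact absurd hx.2 (by linarith))).differentiableAt.differentiableWithinAt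
  · rw [interior_Icc]
    intro x hx
    rw [(gAux_hasDerivAt K L (by intro h; rw [h] at hx; exact absurd hx.1 (by linarith))
      (by intro h; rw [h] at hx; exact absurd hx.2 (by linarith))).deriv]
    exact hd x hx

/-- The key outer bound: outside `(0.68, 0.70)` the ratio exceeds `0.878578`. -/
lemma key_out {ρ : ℝ} (h1 : -1 < ρ) (h2 : ρ ≤ 1) (hc : ρ ≤ 0.68 ∨ 0.70 ≤ ρ) :
    0.878578 * (π * (1 + ρ)) < π + 2 * Real.arcsin ρ := by
  have hpi_lt := Real.pi_lt_d6
  have hpi_gt := Real.pi_gt_d6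
  have hpipos := Real.pi_pos
  rcases le_or_gt ρ 0 with hneg | hpos
  · have hj := jordan_neg h1.le hneg
    have hppos : 0 < π * (1 + ρ) := by nlinarith
    have hexp : π * (1 + ρ) = π + π * ρ := by ring
    linarith
  rcases hc with hle | hge
  · -- ρ ∈ (0, 0.68]
    have hanti : AntitoneOn
        (fun t : ℝ => π + 2 * Real.arcsin t - 0.878578 * (π * (1 + t)) + 0 * t)
        (Icc (0 : ℝ) 0.68) := by
      apply gAux_anti (by norm_num) (by norm_num)
      intro x hx
      have hx1 := hx.1
      have hx2 := hx.2
      have hs : (0.7332 : ℝ) ≤ Real.sqrt (1 - x ^ 2) := by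
        rw [Real.le_sqrt (by norm_num) (by nlinarith)]
        nlinarith
      have hdiv : 2 / Real.sqrt (1 - x ^ 2) ≤ 2 / 0.7332 := by
        gcongr
        all_goals norm_num
      nlinarith
    have hval := hanti ⟨hpos.le, hle⟩ ⟨by norm_num, by norm_num⟩ hle
    simp only at hval
    have h68 := arcsin_68_gt
    linarith
  · -- ρ ∈ [0.70, 1]
    have hmono : MonotoneOn
        (fun t : ℝ => π + 2 * Real.arcsin t - 0.878578 * (π * (1 + t)) + 0 * t)
        (Icc (0.70 : ℝ) 1) := by
      apply gAux_mono (by norm_num) (by norm_num)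
      intro x hx
      have hx1 := hx.1
      have hx2 := hx.2
      have hpos' : (0 : ℝ) < 1 - x ^ 2 := by nlinarith
      have hs : Real.sqrt (1 - x ^ 2) ≤ 0.7142 := by
        rw [Real.sqrt_le_iff]
        constructor
        · norm_num
        · nlinarith
      have hsp : 0 < Real.sqrt (1 - x ^ 2) := Real.sqrt_pos.mpr hpos'
      have hdiv : 2 / 0.7142 ≤ 2 / Real.sqrt (1 - x ^ 2) := by
        gcongr
      nlinarith
    have hval := hmono (by norm_num : (0.70:ℝ) ∈ Icc (0.70:ℝ) 1) ⟨hge, h2⟩ hge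
    simp only at hval
    have h70 := arcsin_70_gt
    linarith

/-- The middle bound: on `[0.68, 0.70]` the ratio exceeds `0.878`. -/
lemma key_mid {ρ : ℝ} (h1 : 0.68 ≤ ρ) (h2 : ρ ≤ 0.70) :
    0.878 * (π * (1 + ρ)) < π + 2 * Real.arcsin ρ := by
  have hpi_lt := Real.pi_lt_d6
  have hpi_gt := Real.pi_gt_d6
  have hmono : MonotoneOn
      (fun t : ℝ => π + 2 * Real.arcsin t - 0.878 * (π * (1 + t)) + 0.031 * t)
      (Icc (0.68 : ℝ) 0.70) := by
    apply gAux_mono (by norm_num) (by norm_num)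
    intro x hx
    have hx1 := hx.1
    have hx2 := hx.2
    have hpos' : (0 : ℝ) < 1 - x ^ 2 := by nlinarith
    have hs : Real.sqrt (1 - x ^ 2) ≤ 0.73322 := by
      rw [Real.sqrt_le_iff]
      constructor
      · norm_num
      · nlinarith
    have hsp : 0 < Real.sqrt (1 - x ^ 2) := Real.sqrt_pos.mpr hpos'
    have hdiv : 2 / 0.73322 ≤ 2 / Real.sqrt (1 - x ^ 2) := by
      gcongr
    nlinarith
  have hval := hmono (by norm_num : (0.68:ℝ) ∈ Icc (0.68:ℝ) 0.70) ⟨h1, h2⟩ h1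
  simp only at hval
  have h68 := arcsin_68_gt
  linarith

/-- Value bound at the sample point `0.689`. -/
lemma key_689 : π + 2 * Real.arcsin 0.689 < 0.878578 * (π * (1 + 0.689)) := by
  have hpi_gt := Real.pi_gt_d6
  have h := arcsin_689_lt
  linarith

lemma gw_lower {c ρ : ℝ} (h1 : -1 < ρ) (h : c * (π * (1 + ρ)) < π + 2 * Real.arcsin ρ) :
    c < gwRatio ρ := by
  have hpi := Real.pi_pos
  have h2 : (0 : ℝ) < 1 + ρ := by linarith
  rw [gwRatio, lt_div_iff₀ h2]
  have key : (1 + 2 / π * Real.arcsin ρ) * π = π + 2 * Real.arcsin ρ := by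
    field_simp
  have : c * (1 + ρ) * π < (1 + 2 / π * Real.arcsin ρ) * π := by
    rw [key]; linarith [h]
  exact lt_of_mul_lt_mul_right this hpi.le

lemma gw_upper {c ρ : ℝ} (h1 : -1 < ρ) (h : π + 2 * Real.arcsin ρ < c * (π * (1 + ρ))) :
    gwRatio ρ < c := by
  have hpi := Real.pi_pos
  have h2 : (0 : ℝ) < 1 + ρ := by linarith
  rw [gwRatio, div_lt_iff₀ h2]
  have key : (1 + 2 / π * Real.arcsin ρ) * π = π + 2 * Real.arcsin ρ := by
    field_simp
  have : (1 + 2 / π * Real.arcsin ρ) * π < c * (1 + ρ) * π := by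
    rw [key]; linarith [h]
  exact lt_of_mul_lt_mul_right this hpi.le

/-- The function `f(ρ) = (1 + (2/π) arcsin ρ)/(1+ρ)` attains its minimum on `(-1, 1]`;
the minimum value `α_GW` satisfies `0.878 < α_GW < 0.879`, and every minimizer `ρ*`
satisfies `0.68 < ρ* < 0.70`. -/
theorem gwRatio_min_attained_and_bounds :
    ∃ ρstar : ℝ, ρstar ∈ Set.Ioc (-1 : ℝ) 1 ∧
      (∀ ρ ∈ Set.Ioc (-1 : ℝ) 1, gwRatio ρstar ≤ gwRatio ρ) ∧
      0.878 < gwRatio ρstar ∧ gwRatio ρstar < 0.879 ∧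
      ∀ ρ' ∈ Set.Ioc (-1 : ℝ) 1,
        (∀ ρ ∈ Set.Ioc (-1 : ℝ) 1, gwRatio ρ' ≤ gwRatio ρ) →
          0.68 < ρ' ∧ ρ' < 0.70 := by
  have hcont : ContinuousOn gwRatio (Icc (0.68 : ℝ) 0.70) := by
    apply ContinuousOn.div
    · exact (continuous_const.add (continuous_const.mul Real.continuous_arcsin)).continuousOn
    · exact (continuous_const.add continuous_id).continuousOn
    · intro x hx
      have h1 := hx.1
      intro hzero
      have : x = -1 := by linarith [hzero, (by linarith : (1:ℝ) + x = 0)]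
      norm_num at h1
      linarith [this ▸ h1]
  obtain ⟨ρs, hmem, hminOn⟩ := isCompact_Icc.exists_isMinOn
    (⟨0.69, by norm_num⟩ : (Icc (0.68 : ℝ) 0.70).Nonempty) hcont
  rw [isMinOn_iff] at hminOn
  have hmem1 : ρs ∈ Set.Ioc (-1 : ℝ) 1 := ⟨by linarith [hmem.1], by linarith [hmem.2]⟩
  have h689mem : (0.689 : ℝ) ∈ Icc (0.68 : ℝ) 0.70 := by norm_num
  have hle689 : gwRatio ρs ≤ gwRatio 0.689 := hminOn 0.689 h689mem
  have h689lt : gwRatio 0.689 < 0.878578 := gw_upper (by norm_num) key_689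
  have hglobal : ∀ ρ ∈ Set.Ioc (-1 : ℝ) 1, gwRatio ρs ≤ gwRatio ρ := by
    rintro ρ ⟨hρ1, hρ2⟩
    by_cases hc : ρ ∈ Icc (0.68 : ℝ) 0.70
    · exact hminOn ρ hc
    · have hout : ρ ≤ 0.68 ∨ 0.70 ≤ ρ := by
        simp only [mem_Icc, not_and_or, not_le] at hc
        rcases hc with h | h
        · exact Or.inl h.le
        · exact Or.inr h.le
      have := gw_lower hρ1 (key_out hρ1 hρ2 hout)
      linarith
  refine ⟨ρs, hmem1, hglobal, ?_, ?_, ?_⟩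
  · exact gw_lower (by linarith [hmem.1]) (key_mid hmem.1 hmem.2)
  · have : (0.878578 : ℝ) < 0.879 := by norm_num
    linarith
  · rintro ρ' ⟨hρ'1, hρ'2⟩ hminρ'
    have hle : gwRatio ρ' ≤ gwRatio 0.689 := hminρ' 0.689 (by norm_num)
    constructor
    · by_contra hcon
      push_neg at hcon
      have := gw_lower hρ'1 (key_out hρ'1 hρ'2 (Or.inl hcon))
      linarith
    · by_contra hcon
      push_neg at hcon
      have := gw_lower hρ'1 (key_out hρ'1 hρ'2 (Or.inr hcon))
      linarith
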